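/- If A = (J−R)Q with J skew-symmetric, R symmetric positive semidefinite, Q symmetric positive definite, then for all t ≥ 0 and all v ∈ ℝⁿ, ‖e^{tA} v‖_Q ≤ ‖v‖_Q, where ‖z‖_Q² = zᵀQz. -/

import Mathlib

/-!
Along the trajectory `x s = e^{sA} v` the energy `E s = xᵀ Q x` has derivative
`2 xᵀ Q (J - R) Q x = -2 (Q x)ᵀ R (Q x) ≤ 0`: the skew-symmetric `J` drops out of the quadratic
form and `R ⪰ 0` dissipates. So `E` is antitone and `E t ≤ E 0 = vᵀ Q v` for `t ≥ 0`.
-/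

open Matrix

namespace Matrix

variable {ι : Type*} [Fintype ι] {α : Type*} [CommRing α]

theorem dotProduct_mulVec_self_eq_zero_of_transpose_eq_neg [IsAddTorsionFree α]
    {J : Matrix ι ι α} (hJ : Jᵀ = -J) (y : ι → α) : y ⬝ᵥ (J *ᵥ y) = 0 :=
  self_eq_neg.1 <| calc
    y ⬝ᵥ (J *ᵥ y) = (Jᵀ *ᵥ y) ⬝ᵥ y := by rw [mulVec_transpose, dotProduct_mulVec]
    _ = -(y ⬝ᵥ (J *ᵥ y)) := by rw [hJ, neg_mulVec, neg_dotProduct, dotProduct_comm]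

theorem IsSymm.dotProduct_mulVec {Q : Matrix ι ι α} (hQ : Q.IsSymm) (x y : ι → α) :
    x ⬝ᵥ (Q *ᵥ y) = (Q *ᵥ x) ⬝ᵥ y := by
  rw [Matrix.dotProduct_mulVec, ← mulVec_transpose, hQ.eq]

theorem dotProduct_mulVec_mulVec_sub_mul [IsAddTorsionFree α] {J R Q : Matrix ι ι α}
    (hJ : Jᵀ = -J) (hQ : Q.IsSymm) (x : ι → α) :
    x ⬝ᵥ (Q *ᵥ ((J - R) * Q) *ᵥ x) = -((Q *ᵥ x) ⬝ᵥ (R *ᵥ (Q *ᵥ x))) := by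
  rw [← mulVec_mulVec, hQ.dotProduct_mulVec, sub_mulVec, dotProduct_sub,
    dotProduct_mulVec_self_eq_zero_of_transpose_eq_neg hJ, zero_sub]

end Matrix

section Derivatives

variable {ι : Type*} [Fintype ι] {𝕜 : Type*} [NontriviallyNormedField 𝕜]

theorem HasDerivAt.dotProduct {f g : 𝕜 → ι → 𝕜} {f' g' : ι → 𝕜} {s : 𝕜}
    (hf : HasDerivAt f f' s) (hg : HasDerivAt g g' s) :
    HasDerivAt (fun u => f u ⬝ᵥ g u) (f' ⬝ᵥ g s + f s ⬝ᵥ g') s := by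
  unfold _root_.dotProduct
  rw [← Finset.sum_add_distrib]
  exact HasDerivAt.fun_sum fun i _ => (hasDerivAt_pi.1 hf i).mul (hasDerivAt_pi.1 hg i)

variable [CompleteSpace 𝕜]

theorem HasDerivAt.const_mulVec {κ : Type*} [Fintype κ] {f : 𝕜 → ι → 𝕜} {f' : ι → 𝕜} {s : 𝕜}
    (M : Matrix κ ι 𝕜) (hf : HasDerivAt f f' s) :
    HasDerivAt (fun u => M *ᵥ f u) (M *ᵥ f') s :=
  (LinearMap.toContinuousLinearMap (mulVecLin M)).hasFDerivAt.comp_hasDerivAt s hf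

theorem HasDerivAt.dotProduct_mulVec_self {f : 𝕜 → ι → 𝕜} {f' : ι → 𝕜} {s : 𝕜}
    {Q : Matrix ι ι 𝕜} (hQ : Q.IsSymm) (hf : HasDerivAt f f' s) :
    HasDerivAt (fun u => f u ⬝ᵥ (Q *ᵥ f u)) (2 * (f s ⬝ᵥ (Q *ᵥ f'))) s := by
  convert hf.dotProduct (hf.const_mulVec Q) using 1
  rw [hQ.dotProduct_mulVec f', dotProduct_comm, two_mul]

end Derivatives

open scoped Matrix.Norms.Operator in
theorem hasDerivAt_exp_smul_mulVec {ι 𝕂 : Type*} [Fintype ι] [DecidableEq ι] [RCLike 𝕂]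
    (A : Matrix ι ι 𝕂) (v : ι → 𝕂) (s : 𝕂) :
    HasDerivAt (fun u : 𝕂 => NormedSpace.exp (u • A) *ᵥ v)
      (A *ᵥ (NormedSpace.exp (s • A) *ᵥ v)) s := by
  let applyTo : Matrix ι ι 𝕂 →ₗ[𝕂] ι → 𝕂 := (LinearMap.applyₗ v).comp toLin'.toLinearMap
  rw [mulVec_mulVec]
  exact (LinearMap.toContinuousLinearMap applyTo).hasFDerivAt.comp_hasDerivAt s
    (hasDerivAt_exp_smul_const' A s)

theorem antitone_dotProduct_mulVec_exp_smul_mulVec {ι : Type*} [Fintype ι] [DecidableEq ι]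
    {J R Q : Matrix ι ι ℝ} (hJ : Jᵀ = -J) (hR : R.PosSemidef) (hQ : Q.IsSymm) (v : ι → ℝ) :
    Antitone fun s : ℝ => (NormedSpace.exp (s • ((J - R) * Q)) *ᵥ v)
      ⬝ᵥ (Q *ᵥ (NormedSpace.exp (s • ((J - R) * Q)) *ᵥ v)) := by
  refine antitone_of_hasDerivAt_nonpos
    (fun s => (hasDerivAt_exp_smul_mulVec _ v s).dotProduct_mulVec_self hQ) fun s => ?_
  have hdissipation := hR.dotProduct_mulVec_nonneg (Q *ᵥ NormedSpace.exp (s • ((J - R) * Q)) *ᵥ v)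
  rw [star_trivial] at hdissipation
  simp only [Pi.zero_apply, dotProduct_mulVec_mulVec_sub_mul hJ hQ]
  linarith

/-- For `A = (J - R) Q` with `J` skew-symmetric, `R ⪰ 0` symmetric and `Q ≻ 0` symmetric,
the semigroup `e^{tA}` is a contraction in the `Q`-norm `‖z‖_Q = √(zᵀ Q z)`:
`‖e^{tA} v‖_Q ≤ ‖v‖_Q` for all `t ≥ 0`. -/
theorem pH_semigroup_Q_contraction
    {n : ℕ} (J R Q : Matrix (Fin n) (Fin n) ℝ)
    (hJ : Jᵀ = -J) (hR : R.PosSemidef) (hQ : Q.PosDef)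
    (t : ℝ) (ht : 0 ≤ t) (v : Fin n → ℝ) :
    Real.sqrt ((NormedSpace.exp (t • ((J - R) * Q)) *ᵥ v)
        ⬝ᵥ (Q *ᵥ (NormedSpace.exp (t • ((J - R) * Q)) *ᵥ v)))
      ≤ Real.sqrt (v ⬝ᵥ (Q *ᵥ v)) := by
  have hQ_symm : Q.IsSymm := isHermitian_iff_isSymm.1 hQ.isHermitian
  have hEnergy := antitone_dotProduct_mulVec_exp_smul_mulVec hJ hR hQ_symm v ht
  simp only [zero_smul, NormedSpace.exp_zero, one_mulVec] at hEnergy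
  exact Real.sqrt_le_sqrt hEnergy
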